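/- For subspaces A, B, C, D, E, F of a finite-dimensional vector space V, I(A;B) + I(A;C) ≤ I(B;C) + I(A;D) + I(B;E|D) + I(C;F|D) + I(A;B|E) + I(A;C|F), where I(X;Y) = dim X + dim Y - dim(X+Y) and I(X;Y|T) = dim(X+T) + dim(Y+T) - dim(X+Y+T) - dim T. -/

import Mathlib

open Module

noncomputable def condH {F V : Type*} [Field F] [AddCommGroup V] [Module F V]
    (X Y : Submodule F V) : ℤ :=
  (finrank F ↑(X ⊔ Y) : ℤ) - finrank F ↑Y

noncomputable def mutI {F V : Type*} [Field F] [AddCommGroup V] [Module F V]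
    (X Y : Submodule F V) : ℤ :=
  (finrank F ↑X : ℤ) + finrank F ↑Y - finrank F ↑(X ⊔ Y)

noncomputable def condI {F V : Type*} [Field F] [AddCommGroup V] [Module F V]
    (X Y T : Submodule F V) : ℤ :=
  (finrank F ↑(X ⊔ T) : ℤ) + finrank F ↑(Y ⊔ T) - finrank F ↑(X ⊔ Y ⊔ T) - finrank F ↑T

/-!
By the Grassmann formula, `I(X;Y) = dim (X ⊓ Y)` and `I(X;Y|T) = dim ((X ⊔ T) ⊓ (Y ⊔ T)) - dim T`. Hence
a subspace `W` lying in both `X` and `Y` loses at most `I(X;Y|T)` in dimension when cut down to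
`W ⊓ T`, because `W ⊔ T ≤ (X ⊔ T) ⊓ (Y ⊔ T)`. Cutting `A ⊓ B` by `E` and then by `D`, and `A ⊓ C`
by `G` and then by `D`, leaves two subspaces of `A ⊓ D` whose intersection lies in `B ⊓ C`, so
their dimensions add up to at most `I(A;D) + I(B;C)`.
-/

section

variable {F V : Type*} [Field F] [AddCommGroup V] [Module F V] [FiniteDimensional F V]

lemma mutI_eq_finrank_inf (X Y : Submodule F V) : mutI X Y = (finrank F ↑(X ⊓ Y) : ℤ) := by
  have := Submodule.finrank_sup_add_finrank_inf_eq X Y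
  unfold mutI
  omega

lemma condI_eq_finrank_inf_sub (X Y T : Submodule F V) :
    condI X Y T = (finrank F ↑((X ⊔ T) ⊓ (Y ⊔ T)) : ℤ) - finrank F ↑T := by
  have := Submodule.finrank_sup_add_finrank_inf_eq (X ⊔ T) (Y ⊔ T)
  rw [sup_sup_sup_comm, sup_idem] at this
  unfold condI
  omega

lemma finrank_sub_finrank_inf_le_condI {W X Y : Submodule F V} (hX : W ≤ X) (hY : W ≤ Y)
    (T : Submodule F V) : (finrank F ↑W : ℤ) - finrank F ↑(W ⊓ T) ≤ condI X Y T := by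
  have hle : finrank F ↑(W ⊔ T) ≤ finrank F ↑((X ⊔ T) ⊓ (Y ⊔ T)) :=
    Submodule.finrank_mono (le_inf (sup_le_sup_right hX T) (sup_le_sup_right hY T))
  have := Submodule.finrank_sup_add_finrank_inf_eq W T
  rw [condI_eq_finrank_inf_sub]
  omega

lemma finrank_add_finrank_le_of_sup_le_of_inf_le {X Y P Q : Submodule F V}
    (hP : X ⊔ Y ≤ P) (hQ : X ⊓ Y ≤ Q) :
    finrank F ↑X + finrank F ↑Y ≤ finrank F ↑P + finrank F ↑Q := by
  rw [← Submodule.finrank_sup_add_finrank_inf_eq X Y]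
  exact add_le_add (Submodule.finrank_mono hP) (Submodule.finrank_mono hQ)

end

theorem stmt16 {F V : Type*} [Field F] [AddCommGroup V] [Module F V] [FiniteDimensional F V]
    (A B C D E G : Submodule F V) :
    mutI A B + mutI A C ≤
      mutI B C + mutI A D + condI B E D + condI C G D + condI A B E + condI A C G := by
  have hABE := finrank_sub_finrank_inf_le_condI (inf_le_left : A ⊓ B ≤ A) inf_le_right E
  have hACG := finrank_sub_finrank_inf_le_condI (inf_le_left : A ⊓ C ≤ A) inf_le_right G
  have hBED := finrank_sub_finrank_inf_le_condI
    (inf_le_left.trans inf_le_right : A ⊓ B ⊓ E ≤ B) inf_le_right D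
  have hCGD := finrank_sub_finrank_inf_le_condI
    (inf_le_left.trans inf_le_right : A ⊓ C ⊓ G ≤ C) inf_le_right D
  have hAD_BC : finrank F ↑(A ⊓ B ⊓ E ⊓ D) + finrank F ↑(A ⊓ C ⊓ G ⊓ D) ≤
      finrank F ↑(A ⊓ D) + finrank F ↑(B ⊓ C) :=
    finrank_add_finrank_le_of_sup_le_of_inf_le
      (sup_le (inf_le_inf_right D (inf_le_left.trans inf_le_left))
        (inf_le_inf_right D (inf_le_left.trans inf_le_left)))
      (inf_le_inf (inf_le_left.trans (inf_le_left.trans inf_le_right))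
        (inf_le_left.trans (inf_le_left.trans inf_le_right)))
  simp only [mutI_eq_finrank_inf]
  omega
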